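/- Let I be an ideal on ω and f ∈ ℓ∞' with f(e) = 0 and f(𝟙_A) = 0 for all A ∈ I. Then for every real k ≥ ‖f‖/2 there exist g, h ∈ SL(I) such that f = k(g − h). -/

import Mathlib

open Filter Topology

noncomputable section

abbrev LInf : Type := lp (fun _ : ℕ => ℝ) (⊤ : ENNReal)

def indic (A : Set ℕ) : LInf :=
  ⟨A.indicator (fun _ => (1:ℝ)), memℓp_infty ⟨1, by
    rintro r ⟨n, rfl⟩
    by_cases h : n ∈ A <;> simp [Set.indicator, h]⟩⟩

def IsIdealOmega (I : Set (Set ℕ)) : Prop :=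
  (∀ A B : Set ℕ, A ∈ I → B ⊆ A → B ∈ I) ∧
  (∀ A B : Set ℕ, A ∈ I → B ∈ I → A ∪ B ∈ I) ∧
  (Set.univ : Set ℕ) ∉ I ∧
  (∀ A : Set ℕ, A.Finite → A ∈ I)

def SLI (I : Set (Set ℕ)) : Set (LInf →L[ℝ] ℝ) :=
  {f | (∀ x : LInf, (∀ n, 0 ≤ x n) → 0 ≤ f x) ∧
       (∀ (x : LInf) (a : ℝ), Tendsto (fun n => x n) atTop (𝓝 a) → f x = a) ∧
       (∀ A ∈ I, f (indic A) = 0)}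

def UltI (I : Set (Set ℕ)) : Set (Ultrafilter ℕ) :=
  {F | (↑F : Filter ℕ) ≤ cofinite ∧ ∀ A ∈ I, Aᶜ ∈ F}

def IClusterPoint (I : Set (Set ℕ)) (x : ℕ → ℝ) (η : ℝ) : Prop :=
  ∀ ε > 0, {n | |x n - η| ≤ ε} ∉ I

def IConv (I : Set (Set ℕ)) (x : ℕ → ℝ) (η : ℝ) : Prop :=
  ∀ ε > 0, {n | ε ≤ |x n - η|} ∈ I

def eone : LInf := indic Set.univ


namespace Stmt14

lemma abs_apply_le (x : LInf) (n : ℕ) : |x n| ≤ ‖x‖ := by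
  rw [← Real.norm_eq_abs]
  exact lp.norm_apply_le_norm ENNReal.top_ne_zero x n

lemma norm_le_of (x : LInf) {C : ℝ} (hC : 0 ≤ C) (h : ∀ n, |x n| ≤ C) : ‖x‖ ≤ C :=
  lp.norm_le_of_forall_le hC (fun n => by rw [Real.norm_eq_abs]; exact h n)

def ofFun (u : ℕ → ℝ) (C : ℝ) (h : ∀ n, |u n| ≤ C) : LInf :=
  ⟨u, memℓp_infty ⟨C, by rintro r ⟨n, rfl⟩; simpa [Real.norm_eq_abs] using h n⟩⟩

@[simp] lemma ofFun_apply (u : ℕ → ℝ) (C : ℝ) (h : ∀ n, |u n| ≤ C) (n : ℕ) :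
    (ofFun u C h) n = u n := rfl

@[simp] lemma indic_apply (A : Set ℕ) (n : ℕ) :
    indic A n = A.indicator (fun _ => (1:ℝ)) n := rfl

lemma abs_max_le {a C : ℝ} (hC : 0 ≤ C) (h : |a| ≤ C) : |max a 0| ≤ C := by
  rw [abs_le] at h ⊢
  exact ⟨by linarith [le_max_right a (0:ℝ)], max_le h.2 hC⟩

def pos (x : LInf) : LInf :=
  ofFun (fun n => max (x n) 0) ‖x‖ (fun n => abs_max_le (norm_nonneg x) (abs_apply_le x n))

@[simp] lemma pos_apply (x : LInf) (n : ℕ) : pos x n = max (x n) 0 := rfl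

lemma pos_nonneg (x : LInf) (n : ℕ) : 0 ≤ pos x n := le_max_right _ _

lemma norm_pos_le (x : LInf) : ‖pos x‖ ≤ ‖x‖ :=
  norm_le_of _ (norm_nonneg x) fun n => abs_max_le (norm_nonneg x) (abs_apply_le x n)

lemma pos_sub_pos_neg (x : LInf) (n : ℕ) : pos x n - pos (-x) n = x n := by
  simp only [pos_apply, lp.coeFn_neg, Pi.neg_apply]
  rcases le_total 0 (x n) with h | h
  · rw [max_eq_left h, max_eq_right (by linarith)]; ring
  · rw [max_eq_right h, max_eq_left (by linarith)]; ring

section FF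

variable (f : LInf →L[ℝ] ℝ)

def Adm (z : LInf) : Set LInf := {y | ∀ n, 0 ≤ y n ∧ y n ≤ z n}

def Fset (z : LInf) : Set ℝ := (fun y => f y) '' Adm z

def FF (z : LInf) : ℝ := sSup (Fset f z)

variable {z u v : LInf}

lemma zero_mem_Adm (hz : ∀ n, 0 ≤ z n) : (0 : LInf) ∈ Adm z := by
  intro n
  simp only [lp.coeFn_zero, Pi.zero_apply]
  exact ⟨le_rfl, hz n⟩

lemma Fset_nonempty (hz : ∀ n, 0 ≤ z n) : (Fset f z).Nonempty :=
  ⟨f 0, 0, zero_mem_Adm hz, rfl⟩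

lemma norm_le_of_adm (hy : y ∈ Adm z) : ‖y‖ ≤ ‖z‖ := by
  refine norm_le_of _ (norm_nonneg z) fun n => ?_
  rw [abs_of_nonneg (hy n).1]
  exact (hy n).2.trans ((le_abs_self _).trans (abs_apply_le z n))

lemma Fset_bddAbove : BddAbove (Fset f z) := by
  refine ⟨‖f‖ * ‖z‖, ?_⟩
  rintro r ⟨y, hy, rfl⟩
  calc f y ≤ |f y| := le_abs_self _
    _ ≤ ‖f‖ * ‖y‖ := by rw [← Real.norm_eq_abs]; exact f.le_opNorm y
    _ ≤ ‖f‖ * ‖z‖ := by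
        exact mul_le_mul_of_nonneg_left (norm_le_of_adm hy) (norm_nonneg f)

lemma le_FF (hy : y ∈ Adm z) : f y ≤ FF f z :=
  le_csSup (Fset_bddAbove f) ⟨y, hy, rfl⟩

lemma FF_nonneg (hz : ∀ n, 0 ≤ z n) : 0 ≤ FF f z := by
  have := le_FF f (zero_mem_Adm hz)
  simpa using this

lemma FF_le (hz : ∀ n, 0 ≤ z n) : FF f z ≤ ‖f‖ * ‖z‖ := by
  refine csSup_le (Fset_nonempty f hz) ?_
  rintro r ⟨y, hy, rfl⟩
  calc f y ≤ |f y| := le_abs_self _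
    _ ≤ ‖f‖ * ‖y‖ := by rw [← Real.norm_eq_abs]; exact f.le_opNorm y
    _ ≤ ‖f‖ * ‖z‖ := mul_le_mul_of_nonneg_left (norm_le_of_adm hy) (norm_nonneg f)

lemma FF_zero : FF f 0 = 0 := by
  have h : Fset f 0 = {0} := by
    apply Set.eq_singleton_iff_unique_mem.2
    constructor
    · exact ⟨0, zero_mem_Adm (fun n => by simp), by simp⟩
    · rintro r ⟨y, hy, rfl⟩
      have : y = 0 := by
        apply lp.ext
        funext n
        have h1 := (hy n).1
        have h2 := (hy n).2
        simp only [lp.coeFn_zero, Pi.zero_apply] at h2 ⊢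
        linarith
      simp [this]
  rw [FF, h, csSup_singleton]

lemma FF_eq_zero (hz : ∀ n, 0 ≤ z n) (h : ∀ y ∈ Adm z, f y = 0) : FF f z = 0 := by
  apply le_antisymm
  · refine csSup_le (Fset_nonempty f hz) ?_
    rintro r ⟨y, hy, rfl⟩
    exact (h y hy).le
  · exact FF_nonneg f hz

lemma FF_add (hu : ∀ n, 0 ≤ u n) (hv : ∀ n, 0 ≤ v n) :
    FF f (u + v) = FF f u + FF f v := by
  have huv : ∀ n, 0 ≤ (u + v) n := fun n => by
    simp only [lp.coeFn_add, Pi.add_apply]; exact add_nonneg (hu n) (hv n)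
  apply le_antisymm
  · refine csSup_le (Fset_nonempty f huv) ?_
    rintro r ⟨y, hy, rfl⟩
    set y₁ : LInf := ofFun (fun n => min (y n) (u n)) ‖u‖ (fun n => by
      rw [abs_of_nonneg (le_min (hy n).1 (hu n))]
      exact (min_le_right _ _).trans ((le_abs_self _).trans (abs_apply_le u n))) with hy₁
    have hy₁adm : y₁ ∈ Adm u := fun n => by
      refine ⟨le_min (hy n).1 (hu n), min_le_right _ _⟩
    have hy₂adm : y - y₁ ∈ Adm v := fun n => by
      have h2 := (hy n).2
      simp only [lp.coeFn_add, Pi.add_apply] at h2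
      simp only [lp.coeFn_sub, Pi.sub_apply, hy₁, ofFun_apply]
      rcases le_total (y n) (u n) with h | h
      · rw [min_eq_left h]; exact ⟨by linarith, by linarith [hv n]⟩
      · rw [min_eq_right h]; exact ⟨by linarith, by linarith⟩
    have : f y = f y₁ + f (y - y₁) := by rw [← map_add]; congr 1; abel
    show f y ≤ _
    rw [this]
    exact add_le_add (le_FF f hy₁adm) (le_FF f hy₂adm)
  · have key : ∀ r ∈ Fset f u, ∀ s ∈ Fset f v, r + s ≤ FF f (u + v) := by
      rintro r ⟨y₁, hy₁, rfl⟩ s ⟨y₂, hy₂, rfl⟩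
      rw [← map_add]
      refine le_FF f fun n => ?_
      have h1 := hy₁ n; have h2 := hy₂ n
      simp only [lp.coeFn_add, Pi.add_apply]
      exact ⟨add_nonneg h1.1 h2.1, add_le_add h1.2 h2.2⟩
    have h1 : FF f u ≤ FF f (u + v) - FF f v := by
      refine csSup_le (Fset_nonempty f hu) fun r hr => ?_
      have : FF f v ≤ FF f (u + v) - r := by
        refine csSup_le (Fset_nonempty f hv) fun s hs => ?_
        linarith [key r hr s hs]
      linarith
    linarith

lemma FF_smul_le {c : ℝ} (hc : 0 < c) (hu : ∀ n, 0 ≤ u n) :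
    FF f (c • u) ≤ c * FF f u := by
  have hcu : ∀ n, 0 ≤ (c • u) n := fun n => by
    simp only [lp.coeFn_smul, Pi.smul_apply, smul_eq_mul]
    exact mul_nonneg hc.le (hu n)
  refine csSup_le (Fset_nonempty f hcu) ?_
  rintro r ⟨y, hy, rfl⟩
  have hadm : c⁻¹ • y ∈ Adm u := fun n => by
    have h1 := (hy n).1
    have h2 := (hy n).2
    simp only [lp.coeFn_smul, Pi.smul_apply, smul_eq_mul] at h2 ⊢
    constructor
    · positivity
    · rw [inv_mul_le_iff₀ hc]; linarith [h2]
  have : f y = c * f (c⁻¹ • y) := by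
    rw [map_smul, smul_eq_mul, ← mul_assoc, mul_inv_cancel₀ hc.ne', one_mul]
  show f y ≤ _
  rw [this]
  exact mul_le_mul_of_nonneg_left (le_FF f hadm) hc.le

lemma FF_smul {c : ℝ} (hc : 0 ≤ c) (hu : ∀ n, 0 ≤ u n) :
    FF f (c • u) = c * FF f u := by
  rcases hc.eq_or_lt with rfl | hc
  · simp [FF_zero]
  · refine le_antisymm (FF_smul_le f hc hu) ?_
    have hcu : ∀ n, 0 ≤ (c • u) n := fun n => by
      simp only [lp.coeFn_smul, Pi.smul_apply, smul_eq_mul]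
      exact mul_nonneg hc.le (hu n)
    have h2 := FF_smul_le f (c := c⁻¹) (u := c • u) (by positivity) hcu
    rw [smul_smul, inv_mul_cancel₀ hc.ne', one_smul] at h2
    calc c * FF f u ≤ c * (c⁻¹ * FF f (c • u)) := mul_le_mul_of_nonneg_left h2 hc.le
      _ = FF f (c • u) := by field_simp

end FF
section Fp

variable (f : LInf →L[ℝ] ℝ)

def Fp (x : LInf) : ℝ := FF f (pos x) - FF f (pos (-x))

lemma Fp_spec (x u v : LInf) (hu : ∀ n, 0 ≤ u n) (hv : ∀ n, 0 ≤ v n)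
    (hx : ∀ n, x n = u n - v n) : Fp f x = FF f u - FF f v := by
  have key : u + pos (-x) = v + pos x := by
    apply lp.ext
    funext n
    have h1 := pos_sub_pos_neg x n
    have h2 := hx n
    simp only [lp.coeFn_add, Pi.add_apply]
    linarith
  have h1 : FF f (u + pos (-x)) = FF f u + FF f (pos (-x)) :=
    FF_add f hu (fun n => pos_nonneg _ n)
  have h2 : FF f (v + pos x) = FF f v + FF f (pos x) :=
    FF_add f hv (fun n => pos_nonneg _ n)
  rw [key, h2] at h1
  unfold Fp
  linarith

lemma Fp_add (x y : LInf) : Fp f (x + y) = Fp f x + Fp f y := by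
  have h1 : Fp f (x + y) = FF f (pos x + pos y) - FF f (pos (-x) + pos (-y)) := by
    refine Fp_spec f _ _ _ (fun n => by
        simp only [lp.coeFn_add, Pi.add_apply]
        exact add_nonneg (pos_nonneg _ n) (pos_nonneg _ n))
      (fun n => by
        simp only [lp.coeFn_add, Pi.add_apply]
        exact add_nonneg (pos_nonneg _ n) (pos_nonneg _ n))
      (fun n => by
        have hx := pos_sub_pos_neg x n
        have hy := pos_sub_pos_neg y n
        simp only [lp.coeFn_add, Pi.add_apply]
        linarith)
  rw [h1, FF_add f (fun n => pos_nonneg _ n) (fun n => pos_nonneg _ n),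
    FF_add f (fun n => pos_nonneg _ n) (fun n => pos_nonneg _ n)]
  unfold Fp
  ring

lemma Fp_smul (c : ℝ) (x : LInf) : Fp f (c • x) = c * Fp f x := by
  rcases le_total 0 c with hc | hc
  · have h1 : Fp f (c • x) = FF f (c • pos x) - FF f (c • pos (-x)) := by
      refine Fp_spec f _ _ _ (fun n => by
          simp only [lp.coeFn_smul, Pi.smul_apply, smul_eq_mul]
          exact mul_nonneg hc (pos_nonneg _ n))
        (fun n => by
          simp only [lp.coeFn_smul, Pi.smul_apply, smul_eq_mul]
          exact mul_nonneg hc (pos_nonneg _ n))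
        (fun n => by
          have hx := pos_sub_pos_neg x n
          simp only [lp.coeFn_smul, Pi.smul_apply, smul_eq_mul]
          ring_nf
          nlinarith [hx])
    rw [h1, FF_smul f hc (fun n => pos_nonneg _ n), FF_smul f hc (fun n => pos_nonneg _ n)]
    unfold Fp; ring
  · have hc' : 0 ≤ -c := by linarith
    have h1 : Fp f (c • x) = FF f ((-c) • pos (-x)) - FF f ((-c) • pos x) := by
      refine Fp_spec f _ _ _ (fun n => by
          simp only [lp.coeFn_smul, Pi.smul_apply, smul_eq_mul]
          exact mul_nonneg hc' (pos_nonneg _ n))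
        (fun n => by
          simp only [lp.coeFn_smul, Pi.smul_apply, smul_eq_mul]
          exact mul_nonneg hc' (pos_nonneg _ n))
        (fun n => by
          have hx := pos_sub_pos_neg x n
          simp only [lp.coeFn_smul, Pi.smul_apply, smul_eq_mul]
          nlinarith [hx])
    rw [h1, FF_smul f hc' (fun n => pos_nonneg _ n), FF_smul f hc' (fun n => pos_nonneg _ n)]
    unfold Fp; ring

lemma Fp_bound (x : LInf) : ‖Fp f x‖ ≤ (2 * ‖f‖) * ‖x‖ := by
  have h1 : 0 ≤ FF f (pos x) := FF_nonneg f (fun n => pos_nonneg _ n)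
  have h2 : 0 ≤ FF f (pos (-x)) := FF_nonneg f (fun n => pos_nonneg _ n)
  have h3 : FF f (pos x) ≤ ‖f‖ * ‖x‖ :=
    (FF_le f (fun n => pos_nonneg _ n)).trans
      (mul_le_mul_of_nonneg_left (norm_pos_le x) (norm_nonneg f))
  have h4 : FF f (pos (-x)) ≤ ‖f‖ * ‖x‖ := by
    refine (FF_le f (fun n => pos_nonneg _ n)).trans ?_
    have := norm_pos_le (-x)
    rw [norm_neg] at this
    exact mul_le_mul_of_nonneg_left this (norm_nonneg f)
  rw [Real.norm_eq_abs, Fp, abs_le]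
  constructor <;> nlinarith

def P : LInf →L[ℝ] ℝ :=
  LinearMap.mkContinuous
    { toFun := Fp f
      map_add' := Fp_add f
      map_smul' := fun c x => Fp_smul f c x }
    (2 * ‖f‖) (Fp_bound f)

lemma P_apply (x : LInf) : P f x = FF f (pos x) - FF f (pos (-x)) := rfl

lemma P_eq (x : LInf) (hx : ∀ n, 0 ≤ x n) : P f x = FF f x := by
  have := Fp_spec f x x 0 hx (fun n => by simp) (fun n => by simp)
  rw [P_apply, ← Fp]
  rw [this, FF_zero, sub_zero]

lemma P_nonneg (x : LInf) (hx : ∀ n, 0 ≤ x n) : 0 ≤ P f x := by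
  rw [P_eq f x hx]; exact FF_nonneg f hx

lemma f_le_P (x : LInf) (hx : ∀ n, 0 ≤ x n) : f x ≤ P f x := by
  rw [P_eq f x hx]
  exact le_FF f (fun n => ⟨hx n, le_rfl⟩)

end Fp
section Kill

open Finset in
lemma f_kill_le_one {I : Set (Set ℕ)} (hI : IsIdealOmega I) (f : LInf →L[ℝ] ℝ)
    (hv : ∀ A ∈ I, f (indic A) = 0) {A : Set ℕ} (hA : A ∈ I) (y : LInf)
    (h0 : ∀ n, 0 ≤ y n) (h1 : ∀ n, y n ≤ indic A n) : f y = 0 := by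
  classical
  have hy1 : ∀ n, y n ≤ 1 := fun n => (h1 n).trans (by
    by_cases h : n ∈ A <;> simp [Set.indicator, h])
  have hyA : ∀ n, n ∉ A → y n = 0 := fun n hn =>
    le_antisymm (by simpa [Set.indicator_of_notMem hn] using h1 n) (h0 n)
  have key : ∀ m : ℕ, 0 < m → |f y| ≤ ‖f‖ * (1 / m) := by
    intro m hm
    have hmR : (0:ℝ) < m := by exact_mod_cast hm
    set s : LInf := (m:ℝ)⁻¹ • ∑ j ∈ Finset.Icc 1 m, indic {n | (j:ℝ) ≤ m * y n} with hs
    have hfs : f s = 0 := by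
      rw [hs, map_smul, map_sum]
      have : ∀ j ∈ Finset.Icc 1 m, f (indic {n | (j:ℝ) ≤ m * y n}) = 0 := by
        intro j hj
        refine hv _ (hI.1 A _ hA ?_)
        intro n hn
        by_contra hnA
        have h2 := hyA n hnA
        simp only [Set.mem_setOf_eq, h2, mul_zero] at hn
        have h3 : (1:ℝ) ≤ j := by exact_mod_cast (Finset.mem_Icc.1 hj).1
        linarith
      rw [Finset.sum_congr rfl this]
      simp
    have hsapp : ∀ n, s n = (⌊(m:ℝ) * y n⌋₊ : ℝ) / m := by
      intro n
      have hcoe : s n = (m:ℝ)⁻¹ * ∑ j ∈ Finset.Icc 1 m,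
          (indic {n' | (j:ℝ) ≤ m * y n'}) n := by
        rw [hs]
        simp only [lp.coeFn_smul, Pi.smul_apply, smul_eq_mul, lp.coeFn_sum, Finset.sum_apply]
      have hterm : ∀ j : ℕ, (indic {n' | (j:ℝ) ≤ m * y n'}) n
          = if (j:ℝ) ≤ m * y n then (1:ℝ) else 0 := by
        intro j
        simp [Set.indicator_apply, Set.mem_setOf_eq]
      have hsum : ∑ j ∈ Finset.Icc 1 m, (indic {n' | (j:ℝ) ≤ m * y n'}) n
          = (⌊(m:ℝ) * y n⌋₊ : ℝ) := by
        simp only [hterm]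
        rw [Finset.sum_boole]
        congr 1
        have hfil : (Finset.Icc 1 m).filter (fun j : ℕ => (j:ℝ) ≤ m * y n)
            = Finset.Icc 1 ⌊(m:ℝ) * y n⌋₊ := by
          ext j
          simp only [Finset.mem_filter, Finset.mem_Icc]
          constructor
          · rintro ⟨⟨hj1, _⟩, hjle⟩
            exact ⟨hj1, Nat.le_floor hjle⟩
          · rintro ⟨hj1, hjfl⟩
            have ht0 : (0:ℝ) ≤ (m:ℝ) * y n := mul_nonneg hmR.le (h0 n)
            have hjr : (j:ℝ) ≤ (m:ℝ) * y n := (Nat.le_floor_iff ht0).1 hjfl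
            have htm : (m:ℝ) * y n ≤ m := by nlinarith [hy1 n]
            refine ⟨⟨hj1, ?_⟩, hjr⟩
            calc j ≤ ⌊(m:ℝ) * y n⌋₊ := hjfl
              _ ≤ ⌊(m:ℝ)⌋₊ := Nat.floor_le_floor htm
              _ = m := Nat.floor_natCast m
        rw [hfil, Nat.card_Icc]
        simp
      rw [hcoe, hsum]
      ring
    have hnorm : ‖y - s‖ ≤ 1 / m := by
      refine norm_le_of _ (by positivity) fun n => ?_
      have hsn := hsapp n
      have ht0 : (0:ℝ) ≤ (m:ℝ) * y n := mul_nonneg hmR.le (h0 n)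
      have hfl1 : ((⌊(m:ℝ) * y n⌋₊ : ℝ)) ≤ (m:ℝ) * y n := Nat.floor_le ht0
      have hfl2 : (m:ℝ) * y n < (⌊(m:ℝ) * y n⌋₊ : ℝ) + 1 := Nat.lt_floor_add_one _
      have : (y - s) n = y n - s n := by
        simp [lp.coeFn_sub]
      rw [this, hsn]
      have h5 : y n - (⌊(m:ℝ) * y n⌋₊ : ℝ) / m = ((m:ℝ) * y n - ⌊(m:ℝ) * y n⌋₊) / m := by
        field_simp
      rw [h5, abs_div, abs_of_pos hmR]
      gcongr
      rw [abs_le]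
      constructor <;> linarith
    have : f y = f (y - s) := by rw [map_sub, hfs, sub_zero]
    rw [this]
    calc |f (y - s)| ≤ ‖f‖ * ‖y - s‖ := by
          rw [← Real.norm_eq_abs]; exact f.le_opNorm _
      _ ≤ ‖f‖ * (1 / m) := mul_le_mul_of_nonneg_left hnorm (norm_nonneg f)
  by_contra h
  have hε : 0 < |f y| := abs_pos.2 h
  obtain ⟨m, hm⟩ := exists_nat_gt (‖f‖ / |f y|)
  have hm1 : (0:ℕ) < m + 1 := Nat.succ_pos m
  have hmR : (0:ℝ) < (m + 1 : ℕ) := by exact_mod_cast hm1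
  have hkey := key (m + 1) hm1
  have hlt : ‖f‖ / |f y| < ((m + 1 : ℕ) : ℝ) := by
    push_cast
    linarith
  rw [div_lt_iff₀ hε] at hlt
  have h2 : ‖f‖ / ((m + 1 : ℕ) : ℝ) < |f y| := (div_lt_iff₀ hmR).2 (by nlinarith)
  rw [mul_one_div] at hkey
  linarith

lemma f_kill_nonneg {I : Set (Set ℕ)} (hI : IsIdealOmega I) (f : LInf →L[ℝ] ℝ)
    (hv : ∀ A ∈ I, f (indic A) = 0) {A : Set ℕ} (hA : A ∈ I) (y : LInf)
    (h0 : ∀ n, 0 ≤ y n) (hsupp : ∀ n, n ∉ A → y n = 0) : f y = 0 := by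
  set M : ℝ := ‖y‖ + 1 with hM
  have hM0 : 0 < M := by positivity
  set y' : LInf := M⁻¹ • y with hy'
  have hle : ∀ n, y' n ≤ indic A n := by
    intro n
    by_cases h : n ∈ A
    · have h1 : y n ≤ M := by
        have := abs_apply_le y n
        rw [abs_le] at this
        linarith [this.2]
      simp only [hy', lp.coeFn_smul, Pi.smul_apply, smul_eq_mul, indic_apply,
        Set.indicator_of_mem h]
      rw [inv_mul_le_iff₀ hM0, mul_one]
      exact h1
    · simp [hy', lp.coeFn_smul, hsupp n h, Set.indicator_of_notMem h]
  have h0' : ∀ n, 0 ≤ y' n := fun n => by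
    simp only [hy', lp.coeFn_smul, Pi.smul_apply, smul_eq_mul]
    exact mul_nonneg (inv_nonneg.2 hM0.le) (h0 n)
  have := f_kill_le_one hI f hv hA y' h0' hle
  have hyy : y = M • y' := by
    rw [hy', smul_smul, mul_inv_cancel₀ hM0.ne', one_smul]
  rw [hyy, map_smul, this, smul_zero]

lemma f_kill {I : Set (Set ℕ)} (hI : IsIdealOmega I) (f : LInf →L[ℝ] ℝ)
    (hv : ∀ A ∈ I, f (indic A) = 0) {A : Set ℕ} (hA : A ∈ I) (y : LInf)
    (hsupp : ∀ n, n ∉ A → y n = 0) : f y = 0 := by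
  have hdec : y = pos y - pos (-y) := by
    apply lp.ext
    funext n
    have := pos_sub_pos_neg y n
    simp only [lp.coeFn_sub, Pi.sub_apply]
    linarith
  have hp : f (pos y) = 0 :=
    f_kill_nonneg hI f hv hA _ (pos_nonneg y) (fun n hn => by simp [hsupp n hn])
  have hq : f (pos (-y)) = 0 :=
    f_kill_nonneg hI f hv hA _ (pos_nonneg _) (fun n hn => by
      simp [lp.coeFn_neg, hsupp n hn])
  rw [hdec, map_sub, hp, hq, sub_zero]

lemma P_kill {I : Set (Set ℕ)} (hI : IsIdealOmega I) (f : LInf →L[ℝ] ℝ)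
    (hv : ∀ A ∈ I, f (indic A) = 0) {A : Set ℕ} (hA : A ∈ I) (y : LInf)
    (hsupp : ∀ n, n ∉ A → y n = 0) : P f y = 0 := by
  rw [P_apply]
  have h1 : FF f (pos y) = 0 := by
    refine FF_eq_zero f (pos_nonneg y) fun w hw => ?_
    refine f_kill_nonneg hI f hv hA w (fun n => (hw n).1) fun n hn => ?_
    have h2 := (hw n).2
    have h3 : pos y n = 0 := by simp [hsupp n hn]
    have h4 := (hw n).1
    linarith
  have h2 : FF f (pos (-y)) = 0 := by
    refine FF_eq_zero f (pos_nonneg _) fun w hw => ?_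
    refine f_kill_nonneg hI f hv hA w (fun n => (hw n).1) fun n hn => ?_
    have h2 := (hw n).2
    have h3 : pos (-y) n = 0 := by simp [lp.coeFn_neg, hsupp n hn]
    have h4 := (hw n).1
    linarith
  rw [h1, h2, sub_zero]

end Kill
section Phi

variable (I : Set (Set ℕ)) (hI : IsIdealOmega I)

def dualF : Filter ℕ :=
  Filter.comk (· ∈ I) (hI.2.2.2 ∅ Set.finite_empty)
    (fun t ht s hs => hI.1 t s ht hs) (fun s hs t ht => hI.2.1 s t hs ht)

lemma dualF_neBot : (dualF I hI).NeBot := by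
  rw [Filter.neBot_iff]
  intro h
  have h1 : (∅ : Set ℕ) ∈ dualF I hI := by rw [h]; exact Filter.mem_bot
  rw [dualF, Filter.mem_comk, Set.compl_empty] at h1
  exact hI.2.2.1 h1

def Uf : Ultrafilter ℕ :=
  haveI := dualF_neBot I hI
  Ultrafilter.of (dualF I hI)

lemma Uf_le : (Uf I hI : Filter ℕ) ≤ dualF I hI :=
  haveI := dualF_neBot I hI
  Ultrafilter.of_le _

lemma compl_mem_Uf {A : Set ℕ} (hA : A ∈ I) : Aᶜ ∈ Uf I hI :=
  Uf_le I hI (by rw [dualF, Filter.mem_comk, compl_compl]; exact hA)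

lemma exists_philim (x : LInf) : ∃ a, Tendsto (⇑x) (Uf I hI : Filter ℕ) (𝓝 a) := by
  have hcpt : IsCompact (Set.Icc (-‖x‖) ‖x‖) := isCompact_Icc
  have hmem : ↑(Ultrafilter.map (⇑x) (Uf I hI)) ≤ 𝓟 (Set.Icc (-‖x‖) ‖x‖) := by
    rw [le_principal_iff]
    refine Filter.mem_map.2 (Filter.univ_mem' fun n => ?_)
    have := abs_apply_le x n
    rw [abs_le] at this
    exact ⟨this.1, this.2⟩
  obtain ⟨a, _, ha⟩ := hcpt.ultrafilter_le_nhds _ hmem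
  exact ⟨a, ha⟩

def philim (x : LInf) : ℝ := (exists_philim I hI x).choose

lemma philim_spec (x : LInf) : Tendsto (⇑x) (Uf I hI : Filter ℕ) (𝓝 (philim I hI x)) :=
  (exists_philim I hI x).choose_spec

lemma philim_add (x y : LInf) : philim I hI (x + y) = philim I hI x + philim I hI y := by
  have h1 : Tendsto (⇑(x + y)) (Uf I hI : Filter ℕ) (𝓝 (philim I hI x + philim I hI y)) := by
    have := (philim_spec I hI x).add (philim_spec I hI y)
    refine this.congr fun n => ?_
    simp [lp.coeFn_add]
  exact tendsto_nhds_unique (philim_spec I hI (x + y)) h1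

lemma philim_smul (a : ℝ) (x : LInf) : philim I hI (a • x) = a * philim I hI x := by
  have h1 : Tendsto (⇑(a • x)) (Uf I hI : Filter ℕ) (𝓝 (a * philim I hI x)) := by
    have := (philim_spec I hI x).const_mul a
    refine this.congr fun n => ?_
    simp [lp.coeFn_smul]
  exact tendsto_nhds_unique (philim_spec I hI (a • x)) h1

lemma philim_bound (x : LInf) : ‖philim I hI x‖ ≤ 1 * ‖x‖ := by
  rw [Real.norm_eq_abs, one_mul, abs_le]
  constructor
  · exact ge_of_tendsto (philim_spec I hI x)
      (Filter.Eventually.of_forall fun n => (abs_le.1 (abs_apply_le x n)).1)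
  · exact le_of_tendsto (philim_spec I hI x)
      (Filter.Eventually.of_forall fun n => (abs_le.1 (abs_apply_le x n)).2)

def phi : LInf →L[ℝ] ℝ :=
  LinearMap.mkContinuous
    { toFun := philim I hI
      map_add' := philim_add I hI
      map_smul' := fun a x => philim_smul I hI a x }
    1 (philim_bound I hI)

lemma phi_apply (x : LInf) : phi I hI x = philim I hI x := rfl

lemma phi_pos (x : LInf) (hx : ∀ n, 0 ≤ x n) : 0 ≤ phi I hI x :=
  ge_of_tendsto (philim_spec I hI x) (Filter.Eventually.of_forall hx)

lemma phi_kill {A : Set ℕ} (hA : A ∈ I) (y : LInf) (hsupp : ∀ n, n ∉ A → y n = 0) :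
    phi I hI y = 0 := by
  have h1 : Tendsto (⇑y) (Uf I hI : Filter ℕ) (𝓝 0) := by
    have hev : ∀ᶠ n in (Uf I hI : Filter ℕ), y n = 0 :=
      Filter.mem_of_superset (compl_mem_Uf I hI hA) (fun n hn => hsupp n hn)
    exact Tendsto.congr' (by filter_upwards [hev] with n hn using hn.symm) tendsto_const_nhds
  exact tendsto_nhds_unique (philim_spec I hI y) h1

lemma eone_apply (n : ℕ) : eone n = 1 := by
  simp [eone]

lemma phi_eone : phi I hI eone = 1 := by
  have h1 : Tendsto (⇑eone) (Uf I hI : Filter ℕ) (𝓝 1) := by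
    refine Tendsto.congr (fun n => (eone_apply n).symm) tendsto_const_nhds
  exact tendsto_nhds_unique (philim_spec I hI eone) h1

end Phi

section MemSLI

lemma mem_SLI_of {I : Set (Set ℕ)} (hI : IsIdealOmega I) (ψ : LInf →L[ℝ] ℝ)
    (hpos : ∀ x : LInf, (∀ n, 0 ≤ x n) → 0 ≤ ψ x)
    (hkill : ∀ A ∈ I, ∀ y : LInf, (∀ n, n ∉ A → y n = 0) → ψ y = 0)
    (hone : ψ eone = 1) : ψ ∈ SLI I := by
  refine ⟨hpos, ?_, ?_⟩
  · intro x a hx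
    set z : LInf := x - a • eone with hzdef
    have hzn : ∀ n, z n = x n - a := fun n => by
      show x n - a * eone n = x n - a
      rw [eone_apply, mul_one]
    have hz0 : Tendsto (fun n => z n) atTop (𝓝 0) := by
      have h1 := hx.sub (tendsto_const_nhds (x := a))
      rw [sub_self] at h1
      exact h1.congr fun n => (hzn n).symm
    have hmain : ψ z = 0 := by
      have hb : ∀ ε > (0:ℝ), |ψ z| ≤ ε := by
        intro ε hε
        obtain ⟨N, hN⟩ := Metric.tendsto_atTop.1 hz0 ε hε
        have hN' : ∀ n, N ≤ n → |z n| ≤ ε := fun n hn => by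
          have := hN n hn
          rw [Real.dist_eq, sub_zero] at this
          exact this.le
        set C : Set ℕ := {n | n < N} with hC
        have hCI : C ∈ I := hI.2.2.2 _ (Set.finite_Iio N)
        set z1 : LInf := ofFun (C.indicator ⇑z) ‖z‖ (fun n => by
          by_cases h : n ∈ C
          · rw [Set.indicator_of_mem h]; exact abs_apply_le z n
          · rw [Set.indicator_of_notMem h, abs_zero]; exact norm_nonneg z) with hz1
        have hψz1 : ψ z1 = 0 :=
          hkill C hCI z1 (fun n hn => by
            simp only [hz1, ofFun_apply, Set.indicator_of_notMem hn])
        have hz2 : ∀ n, |(z - z1) n| ≤ ε := by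
          intro n
          have hco : (z - z1) n = z n - z1 n := by simp [lp.coeFn_sub]
          by_cases h : n ∈ C
          · rw [hco]
            simp only [hz1, ofFun_apply, Set.indicator_of_mem h, sub_self, abs_zero]
            exact hε.le
          · rw [hco]
            simp only [hz1, ofFun_apply, Set.indicator_of_notMem h, sub_zero]
            exact hN' n (not_lt.1 h)
        have hub : ψ (z - z1) ≤ ε := by
          have h1 := hpos (ε • eone - (z - z1)) (fun n => by
            have h2 := (abs_le.1 (hz2 n)).2
            simp only [lp.coeFn_sub, Pi.sub_apply] at h2
            simp only [lp.coeFn_sub, Pi.sub_apply, lp.coeFn_smul, Pi.smul_apply,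
              smul_eq_mul, eone_apply, mul_one]
            linarith)
          rw [map_sub, map_smul, hone, smul_eq_mul, mul_one] at h1
          linarith
        have hlb : -ε ≤ ψ (z - z1) := by
          have h1 := hpos ((z - z1) + ε • eone) (fun n => by
            have h2 := (abs_le.1 (hz2 n)).1
            simp only [lp.coeFn_sub, Pi.sub_apply] at h2
            simp only [lp.coeFn_add, Pi.add_apply, lp.coeFn_sub, Pi.sub_apply,
              lp.coeFn_smul, Pi.smul_apply, smul_eq_mul, eone_apply, mul_one]
            linarith)
          rw [map_add, map_smul, hone, smul_eq_mul, mul_one] at h1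
          linarith
        have hsplit : ψ z = ψ z1 + ψ (z - z1) := by
          rw [← map_add]
          congr 1
          abel
        rw [hsplit, hψz1, zero_add, abs_le]
        exact ⟨hlb, hub⟩
      by_contra h
      have h1 := hb (|ψ z| / 2) (by positivity)
      have h2 : 0 < |ψ z| := abs_pos.2 h
      linarith
    have hxz : ψ x = ψ z + a * ψ eone := by
      have h1 : ψ (a • eone) = a * ψ eone := by rw [map_smul, smul_eq_mul]
      rw [← h1, ← map_add]
      congr 1
      rw [hzdef]
      abel
    rw [hxz, hmain, hone, zero_add, mul_one]
  · intro A hA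
    exact hkill A hA (indic A) (fun n hn => by simp [Set.indicator_of_notMem hn])

end MemSLI
end Stmt14
open Stmt14

set_option maxHeartbeats 1000000

theorem stmt14 (I : Set (Set ℕ)) (hI : IsIdealOmega I) (f : LInf →L[ℝ] ℝ)
    (h0 : f eone = 0) (hv : ∀ A ∈ I, f (indic A) = 0) (k : ℝ) (hk : ‖f‖ / 2 ≤ k) :
    ∃ g ∈ SLI I, ∃ h ∈ SLI I, f = k • (g - h) := by
  classical
  have hφmem : phi I hI ∈ SLI I :=
    mem_SLI_of hI _ (phi_pos I hI) (fun A hA y hy => phi_kill I hI hA y hy) (phi_eone I hI)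
  by_cases hk0 : k = 0
  · subst hk0
    have hf : f = 0 := norm_le_zero_iff.1 (by linarith)
    exact ⟨_, hφmem, _, hφmem, by simp [hf]⟩
  · have hk' : 0 < k := lt_of_le_of_ne (le_trans (by positivity) hk) (Ne.symm hk0)
    have heone_pos : ∀ n, 0 ≤ eone n := fun n => by rw [eone_apply]; norm_num
    set c := P f eone with hc
    have hc0 : 0 ≤ c := P_nonneg f eone heone_pos
    have hce : c ≤ ‖f‖ / 2 := by
      rw [hc, P_eq f eone heone_pos]
      refine csSup_le (Fset_nonempty f heone_pos) ?_
      rintro r ⟨y, hy, rfl⟩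
      show f y ≤ ‖f‖ / 2
      have hb : ‖(2:ℝ) • y - eone‖ ≤ 1 := by
        refine norm_le_of _ zero_le_one fun n => ?_
        have h1 := (hy n).1
        have h2 := (hy n).2
        rw [eone_apply] at h2
        simp only [lp.coeFn_sub, Pi.sub_apply, lp.coeFn_smul, Pi.smul_apply,
          smul_eq_mul, eone_apply]
        rw [abs_le]
        constructor <;> linarith
      have h3 : f ((2:ℝ) • y - eone) = 2 * f y := by
        rw [map_sub, map_smul, h0, smul_eq_mul, sub_zero]
      have h4 : f ((2:ℝ) • y - eone) ≤ ‖f‖ := by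
        calc f ((2:ℝ) • y - eone) ≤ |f ((2:ℝ) • y - eone)| := le_abs_self _
          _ ≤ ‖f‖ * ‖(2:ℝ) • y - eone‖ := by
              rw [← Real.norm_eq_abs]; exact f.le_opNorm _
          _ ≤ ‖f‖ * 1 := mul_le_mul_of_nonneg_left hb (norm_nonneg f)
          _ = ‖f‖ := mul_one _
      linarith [h3 ▸ h4]
    have hck : c ≤ k := le_trans hce hk
    set gg := k⁻¹ • (P f + (k - c) • phi I hI) with hgg
    set hh := k⁻¹ • ((P f - f) + (k - c) • phi I hI) with hhh
    have happg : ∀ x : LInf, gg x = k⁻¹ * (P f x + (k - c) * phi I hI x) := fun x => by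
      simp [hgg, ContinuousLinearMap.smul_apply, ContinuousLinearMap.add_apply]
      ring
    have happh : ∀ x : LInf, hh x = k⁻¹ * ((P f x - f x) + (k - c) * phi I hI x) := fun x => by
      simp [hhh, ContinuousLinearMap.smul_apply, ContinuousLinearMap.add_apply,
        ContinuousLinearMap.sub_apply]
      ring
    have hgmem : gg ∈ SLI I := by
      refine mem_SLI_of hI _ ?_ ?_ ?_
      · intro x hx
        rw [happg x]
        exact mul_nonneg (inv_nonneg.2 hk'.le)
          (add_nonneg (P_nonneg f x hx)
            (mul_nonneg (by linarith) (phi_pos I hI x hx)))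
      · intro A hA y hy
        rw [happg y, P_kill hI f hv hA y hy, phi_kill I hI hA y hy]
        ring
      · rw [happg eone, phi_eone, ← hc]
        field_simp
        ring
    have hhmem : hh ∈ SLI I := by
      refine mem_SLI_of hI _ ?_ ?_ ?_
      · intro x hx
        rw [happh x]
        exact mul_nonneg (inv_nonneg.2 hk'.le)
          (add_nonneg (by linarith [f_le_P f x hx])
            (mul_nonneg (by linarith) (phi_pos I hI x hx)))
      · intro A hA y hy
        rw [happh y, P_kill hI f hv hA y hy, phi_kill I hI hA y hy,
          f_kill hI f hv hA y hy]
        ring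
      · rw [happh eone, phi_eone, h0, ← hc]
        field_simp
        ring
    refine ⟨gg, hgmem, hh, hhmem, ?_⟩
    rw [hgg, hhh, show k⁻¹ • (P f + (k - c) • phi I hI) - k⁻¹ • (P f - f + (k - c) • phi I hI)
        = k⁻¹ • ((P f + (k - c) • phi I hI) - ((P f - f) + (k - c) • phi I hI)) from by
      ext x
      simp only [ContinuousLinearMap.sub_apply, ContinuousLinearMap.smul_apply, smul_eq_mul, mul_sub]]
    have h5 : (P f + (k - c) • phi I hI) - ((P f - f) + (k - c) • phi I hI) = f := by
      abel
    rw [h5, smul_smul, mul_inv_cancel₀ hk0, one_smul]
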